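/- arXiv:2302.05806 — 8 statements merged into one kernel-verified Lean document; each statement's English description precedes it below -/
import Mathlib

section
/- In the habit formation logit model, the stationary distribution of the Markov chain over alternatives in a menu A has the closed form p(x,A) = e^{v(x)} (∑_{y∈A} e^{v(y)+c(y)·1{x=y}}) / (∑_{z∈A} e^{v(z)} (∑_{y∈A} e^{v(y)+c(y)·1{z=y}})). That is, this distribution satisfies the stationarity equation p(x,A) = ∑_{y∈A} p(y,A)·p(x,A|y). -/
/-- In the habit formation logit model, the closed-form distribution
`p(x,A) = e^{v(x)} (∑_{y∈A} e^{v(y)+c(y)·1{x=y}}) / (∑_{z∈A} e^{v(z)} (∑_{y∈A} e^{v(y)+c(y)·1{z=y}}))`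
is stationary for the Markov chain with transition probabilities
`p(x,A|y) = e^{v(x)+c(x)·1{x=y}} / ∑_{z∈A} e^{v(z)+c(z)·1{z=y}}`. -/
theorem habit_formation_logit_stationary {α : Type*} [DecidableEq α]
    (A : Finset α) (hA : A.Nonempty) (v c : α → ℝ)
    (pcond : α → α → ℝ)
    (hpcond : ∀ x y, pcond x y =
      Real.exp (v x + c x * (if x = y then 1 else 0)) /
        ∑ z ∈ A, Real.exp (v z + c z * (if z = y then 1 else 0)))
    (p : α → ℝ)
    (hp : ∀ x, p x =
      Real.exp (v x) * (∑ y ∈ A, Real.exp (v y + c y * (if x = y then 1 else 0))) /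
        ∑ z ∈ A, Real.exp (v z) * ∑ y ∈ A, Real.exp (v y + c y * (if z = y then 1 else 0))) :
    ∀ x ∈ A, p x = ∑ y ∈ A, p y * pcond x y := by
  intro x hx
  have hDpos : ∀ y : α, 0 < ∑ z ∈ A, Real.exp (v z + c z * (if z = y then 1 else 0)) :=
    fun y => Finset.sum_pos (fun z _ => Real.exp_pos _) hA
  have hcomm : ∀ w : α, (∑ y ∈ A, Real.exp (v y + c y * (if w = y then 1 else 0)))
      = ∑ y ∈ A, Real.exp (v y + c y * (if y = w then 1 else 0)) := by
    intro w
    refine Finset.sum_congr rfl fun y _ => ?_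
    simp [eq_comm]
  set S : ℝ := ∑ z ∈ A, Real.exp (v z) *
      ∑ y ∈ A, Real.exp (v y + c y * (if z = y then 1 else 0)) with hS
  have hSpos : 0 < S :=
    Finset.sum_pos (fun z _ => mul_pos (Real.exp_pos _) (by rw [hcomm z]; exact hDpos z)) hA
  have key : ∀ y : α, p y * pcond x y =
      Real.exp (v x) * Real.exp (v y + c y * (if x = y then 1 else 0)) / S := by
    intro y
    rw [hp y, hpcond x y, hcomm y]
    rw [div_mul_div_comm]
    have hnum : Real.exp (v y) *
        (∑ z ∈ A, Real.exp (v z + c z * (if z = y then 1 else 0))) *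
        Real.exp (v x + c x * (if x = y then 1 else 0)) =
        Real.exp (v x) * Real.exp (v y + c y * (if x = y then 1 else 0)) *
        (∑ z ∈ A, Real.exp (v z + c z * (if z = y then 1 else 0))) := by
      have : Real.exp (v y) * Real.exp (v x + c x * (if x = y then 1 else 0)) =
          Real.exp (v x) * Real.exp (v y + c y * (if x = y then 1 else 0)) := by
        by_cases h : x = y
        · subst h; simp
        · simp [h, ← Real.exp_add]; ring_nf
      calc Real.exp (v y) * (∑ z ∈ A, Real.exp (v z + c z * (if z = y then 1 else 0))) *
            Real.exp (v x + c x * (if x = y then 1 else 0))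
          = Real.exp (v y) * Real.exp (v x + c x * (if x = y then 1 else 0)) *
            (∑ z ∈ A, Real.exp (v z + c z * (if z = y then 1 else 0))) := by ring
        _ = _ := by rw [this]
    rw [hnum, mul_comm S, ← div_div, mul_div_assoc,
      div_self (ne_of_gt (hDpos y)), mul_one]
  calc p x = Real.exp (v x) *
        (∑ y ∈ A, Real.exp (v y + c y * (if x = y then 1 else 0))) / S := hp x
    _ = ∑ y ∈ A, Real.exp (v x) * Real.exp (v y + c y * (if x = y then 1 else 0)) / S := by
        rw [Finset.mul_sum, Finset.sum_div]
    _ = ∑ y ∈ A, p y * pcond x y := by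
        refine Finset.sum_congr rfl fun y _ => ?_
        rw [key y]
end

section
/- In the two-alternative habit formation logit model with alternatives x and an outside option o (with v(o)=0 and c(o)=0), the standard logit estimator v̂(x) = log(p(x,{x,o})/p(o,{x,o})) satisfies v̂(x) = v(x) + log(1+e^{v(x)+c(x)}) − log(1+e^{v(x)}). Consequently, v̂(x) = v(x) if and only if c(x) = 0. -/
/-- In the two-alternative habit formation logit model (outside option `o`
with `v(o)=0`, `c(o)=0`), the standard logit estimator
`v̂(x) = log(p(x,{x,o})/p(o,{x,o}))` satisfies
`v̂(x) = v(x) + log(1+e^{v(x)+c(x)}) − log(1+e^{v(x)})`, and `v̂(x) = v(x) ↔ c(x) = 0`. -/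
theorem habit_formation_logit_estimator_bias (vx cx : ℝ) (hcx : 0 ≤ cx)
    (D px po vhat : ℝ)
    (hD : D = Real.exp vx * (1 + Real.exp (vx + cx)) + (1 + Real.exp vx))
    (hpx : px = Real.exp vx * (1 + Real.exp (vx + cx)) / D)
    (hpo : po = (1 + Real.exp vx) / D)
    (hvhat : vhat = Real.log (px / po)) :
    vhat = vx + Real.log (1 + Real.exp (vx + cx)) - Real.log (1 + Real.exp vx)
      ∧ (vhat = vx ↔ cx = 0) := by
  have h1 : (0:ℝ) < 1 + Real.exp (vx + cx) := by positivity
  have h2 : (0:ℝ) < 1 + Real.exp vx := by positivity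
  have hDpos : 0 < D := by rw [hD]; positivity
  have hratio : px / po = Real.exp vx * (1 + Real.exp (vx + cx)) / (1 + Real.exp vx) := by
    rw [hpx, hpo]
    field_simp
  have hmain : vhat = vx + Real.log (1 + Real.exp (vx + cx)) - Real.log (1 + Real.exp vx) := by
    rw [hvhat, hratio, Real.log_div (by positivity) (ne_of_gt h2),
      Real.log_mul (Real.exp_ne_zero _) (ne_of_gt h1), Real.log_exp]
  refine ⟨hmain, ?_⟩
  rw [hmain]
  constructor
  · intro h
    have : Real.log (1 + Real.exp (vx + cx)) = Real.log (1 + Real.exp vx) := by linarith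
    have := Real.log_injOn_pos (Set.mem_Ioi.mpr h1) (Set.mem_Ioi.mpr h2) this
    have hexp : Real.exp (vx + cx) = Real.exp vx := by linarith
    have := Real.exp_injective hexp
    linarith
  · intro h
    rw [h, add_zero]
    ring
end

section
/- The habit formation logit stationary choice probabilities satisfy IIA between the menus {x,o} and {x,y,o} if and only if c(x) = 0. Specifically, e^{v(x)}(1+e^{v(x)+c(x)})/(1+e^{v(x)}) = e^{v(x)}(1+e^{v(x)+c(x)}+e^{v(y)})/(1+e^{v(x)}+e^{v(y)}) if and only if c(x) = 0. -/
/-- Habit formation logit satisfies IIA between `{x,o}` and `{x,y,o}`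
iff `c(x) = 0`. -/
theorem habit_formation_logit_IIA_iff (vx vy cx : ℝ) (hcx : 0 ≤ cx) :
    Real.exp vx * (1 + Real.exp (vx + cx)) / (1 + Real.exp vx) =
      Real.exp vx * (1 + Real.exp (vx + cx) + Real.exp vy) / (1 + Real.exp vx + Real.exp vy)
    ↔ cx = 0 := by
  have ha := Real.exp_pos vx
  have hb := Real.exp_pos (vx + cx)
  have hy := Real.exp_pos vy
  have h1 : (1 : ℝ) + Real.exp vx ≠ 0 := by positivity
  have h2 : (1 : ℝ) + Real.exp vx + Real.exp vy ≠ 0 := by positivity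
  constructor
  · intro h
    rw [div_eq_div_iff h1 h2] at h
    have hbe : Real.exp (vx + cx) = Real.exp vx := by nlinarith [mul_pos ha hy, sq_nonneg (Real.exp vx)]
    have := Real.exp_injective hbe
    linarith
  · intro h
    subst h
    rw [add_zero]
    rw [div_eq_div_iff h1 h2]
    ring
end

section
/- A random joint choice rule p on two periods satisfies marginality if and only if its Möbius inverse q satisfies: for every A ∈ 𝒳, every B ⊊ X with B nonempty, and every x ∈ A, ∑_{y∈B} q(x,y,A,B) = ∑_{z∉B} q(x,z,A,B∪{z}). -/
open Finset

private def supOf {α : Type*} [Fintype α] [DecidableEq α] (B : Finset α) : Finset (Finset α) :=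
  Finset.univ.powerset.filter (fun B' => B ⊆ B')

private lemma mem_supOf {α : Type*} [Fintype α] [DecidableEq α] {B B' : Finset α} :
    B' ∈ supOf B ↔ B ⊆ B' := by
  simp [supOf]

/-- Alternating sum over the interval `[B, C]`. -/
private lemma alt_sum_Icc {α : Type*} [DecidableEq α] (B C : Finset α) (hBC : B ⊆ C) :
    ∑ B' ∈ C.powerset.filter (fun B' => B ⊆ B'), (-1 : ℝ) ^ (B' \ B).card
      = if C = B then 1 else 0 := by
  have h1 : ∑ B' ∈ C.powerset.filter (fun B' => B ⊆ B'), (-1 : ℝ) ^ (B' \ B).card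
      = ∑ S ∈ (C \ B).powerset, (-1 : ℝ) ^ S.card := by
    refine Finset.sum_nbij' (fun B' => B' \ B) (fun S => S ∪ B) ?_ ?_ ?_ ?_ ?_
    · intro B' hB'
      simp only [mem_filter, mem_powerset] at hB'
      exact mem_powerset.2 (sdiff_subset_sdiff hB'.1 (Finset.Subset.refl B))
    · intro S hS
      simp only [mem_powerset] at hS
      refine mem_filter.2 ⟨mem_powerset.2 (union_subset (hS.trans sdiff_subset) hBC), subset_union_right⟩
    · intro B' hB'
      simp only [mem_filter, mem_powerset] at hB'
      exact sdiff_union_of_subset hB'.2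
    · intro S hS
      simp only [mem_powerset] at hS
      show (S ∪ B) \ B = S
      rw [union_sdiff_right, Finset.sdiff_eq_self_iff_disjoint]
      exact Finset.sdiff_disjoint.mono_left hS
    · intro B' _; rfl
  rw [h1]
  have h2 : ((∑ S ∈ (C \ B).powerset, (-1 : ℤ) ^ S.card : ℤ) : ℝ)
      = ∑ S ∈ (C \ B).powerset, (-1 : ℝ) ^ S.card := by push_cast; rfl
  rw [← h2, Finset.sum_powerset_neg_one_pow_card]
  by_cases h : C = B
  · simp [h]
  · have : C \ B ≠ ∅ := by
      intro he
      exact h (Finset.Subset.antisymm (by rw [← sdiff_union_of_subset hBC, he, empty_union]) hBC)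
    simp [this, h]

/-- Möbius inversion over supersets in a finite Boolean lattice. -/
private lemma mobius_sup {α : Type*} [Fintype α] [DecidableEq α] (g : Finset α → ℝ)
    (B : Finset α) :
    ∑ B' ∈ supOf B, (-1 : ℝ) ^ (B' \ B).card * ∑ B'' ∈ supOf B', g B'' = g B := by
  have h1 : ∑ B' ∈ supOf B, (-1 : ℝ) ^ (B' \ B).card * ∑ B'' ∈ supOf B', g B''
      = ∑ B' ∈ supOf B, ∑ B'' ∈ supOf B', (-1 : ℝ) ^ (B' \ B).card * g B'' := by
    simp [Finset.mul_sum]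
  rw [h1]
  rw [Finset.sum_comm' (s' := fun B'' => B''.powerset.filter (fun B' => B ⊆ B')) (t' := supOf B)
    (by
      intro B' B''
      simp only [mem_supOf, mem_filter, mem_powerset]
      constructor
      · rintro ⟨h1, h2⟩; exact ⟨⟨h2, h1⟩, h1.trans h2⟩
      · rintro ⟨⟨h1, h2⟩, h3⟩; exact ⟨h2, h1⟩)]
  rw [Finset.sum_eq_single_of_mem B (mem_supOf.2 (Finset.Subset.refl B))]
  · rw [← Finset.sum_mul, alt_sum_Icc B B (Finset.Subset.refl B), if_pos rfl, one_mul]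
  · intro B'' hB'' hne
    rw [← Finset.sum_mul, alt_sum_Icc B B'' (mem_supOf.1 hB''), if_neg hne, zero_mul]

/-- Reindexing: summing over pairs `(B', z)` with `B ⊆ B'`, `z ∉ B'` of `v z (insert z B')`
equals summing over pairs `(C, y)` with `B ⊆ C`, `y ∈ C \ B` of `v y C`. -/
private lemma reindex_sum {α : Type*} [Fintype α] [DecidableEq α] (v : α → Finset α → ℝ)
    (B : Finset α) :
    ∑ B' ∈ supOf B, ∑ z ∈ Finset.univ \ B', v z (insert z B')
      = ∑ C ∈ supOf B, ∑ y ∈ C \ B, v y C := by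
  rw [Finset.sum_sigma', Finset.sum_sigma']
  refine Finset.sum_nbij' (fun a => ⟨insert a.2 a.1, a.2⟩) (fun b => ⟨b.1.erase b.2, b.2⟩)
    ?_ ?_ ?_ ?_ ?_
  · rintro ⟨B', z⟩ h
    simp only [mem_sigma, mem_supOf, mem_sdiff, mem_univ, true_and] at h ⊢
    exact ⟨h.1.trans (subset_insert _ _), mem_insert_self _ _, fun hz => h.2 (h.1 hz)⟩
  · rintro ⟨C, y⟩ h
    simp only [mem_sigma, mem_supOf, mem_sdiff, mem_univ, true_and] at h ⊢
    exact ⟨subset_erase.2 ⟨h.1, h.2.2⟩, notMem_erase _ _⟩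
  · rintro ⟨B', z⟩ h
    simp only [mem_sigma, mem_supOf, mem_sdiff, mem_univ, true_and] at h
    simp [erase_insert h.2]
  · rintro ⟨C, y⟩ h
    simp only [mem_sigma, mem_supOf, mem_sdiff] at h
    simp [insert_erase h.2.1]
  · rintro ⟨B', z⟩ _; rfl

/-- A two-period random joint choice rule `p` satisfies marginality iff
its Möbius inverse `q` satisfies: for every nonempty `A`, every nonempty `B ⊊ X`, and
every `x ∈ A`, `∑_{y∈B} q(x,y,A,B) = ∑_{z∉B} q(x,z,A,B∪{z})`. -/
theorem marginality_iff_mobius_flow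
    {α : Type*} [Fintype α] [DecidableEq α]
    (p q : α → α → Finset α → Finset α → ℝ)
    (hp0 : ∀ x y A B, 0 ≤ p x y A B)
    (hpz : ∀ x y (A B : Finset α), x ∉ A ∨ y ∉ B → p x y A B = 0)
    (hp1 : ∀ A B : Finset α, A.Nonempty → B.Nonempty →
      ∑ x ∈ A, ∑ y ∈ B, p x y A B = 1)
    (hq : ∀ x y (A B : Finset α), A.Nonempty → B.Nonempty →
      p x y A B = ∑ A' ∈ Finset.univ.powerset.filter (fun A' => A ⊆ A'),
        ∑ B' ∈ Finset.univ.powerset.filter (fun B' => B ⊆ B'), q x y A' B') :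
    (∀ (A B C : Finset α), A.Nonempty → B.Nonempty → C.Nonempty → ∀ x ∈ A,
        ∑ y ∈ B, p x y A B = ∑ y ∈ C, p x y A C) ↔
      (∀ A : Finset α, A.Nonempty → ∀ B : Finset α, B.Nonempty → B ≠ Finset.univ →
        ∀ x ∈ A, ∑ y ∈ B, q x y A B = ∑ z ∈ Finset.univ \ B, q x z A (insert z B)) := by
  -- The key identity: the B-marginal of p decomposes as a sum of "divergences".
  have key : ∀ (A B : Finset α) (x : α), A.Nonempty → B.Nonempty →
      ∑ y ∈ B, p x y A B = ∑ B' ∈ supOf B, ∑ A' ∈ supOf A,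
        ((∑ y ∈ B', q x y A' B') - ∑ z ∈ Finset.univ \ B', q x z A' (insert z B')) := by
    intro A B x hA hB
    calc ∑ y ∈ B, p x y A B
        = ∑ y ∈ B, ∑ A' ∈ supOf A, ∑ B' ∈ supOf B, q x y A' B' :=
          Finset.sum_congr rfl (fun y _ => hq x y A B hA hB)
      _ = ∑ A' ∈ supOf A, ∑ B' ∈ supOf B, ∑ y ∈ B, q x y A' B' := by
          rw [Finset.sum_comm]
          exact Finset.sum_congr rfl (fun A' _ => Finset.sum_comm)
      _ = ∑ A' ∈ supOf A, ∑ B' ∈ supOf B,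
            ((∑ y ∈ B', q x y A' B') - ∑ y ∈ B' \ B, q x y A' B') := by
          refine Finset.sum_congr rfl (fun A' _ => Finset.sum_congr rfl (fun B' hB' => ?_))
          have hsub : B ⊆ B' := mem_supOf.1 hB'
          rw [eq_sub_iff_add_eq, add_comm, Finset.sum_sdiff hsub]
      _ = ∑ A' ∈ supOf A, ∑ B' ∈ supOf B,
            ((∑ y ∈ B', q x y A' B') - ∑ z ∈ Finset.univ \ B', q x z A' (insert z B')) := by
          refine Finset.sum_congr rfl (fun A' _ => ?_)
          rw [Finset.sum_sub_distrib, Finset.sum_sub_distrib,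
            reindex_sum (fun z C => q x z A' C) B]
      _ = ∑ B' ∈ supOf B, ∑ A' ∈ supOf A,
            ((∑ y ∈ B', q x y A' B') - ∑ z ∈ Finset.univ \ B', q x z A' (insert z B')) :=
          Finset.sum_comm
  constructor
  · -- marginality ⇒ flow condition
    intro hmarg A hA B hB hBu x hx
    -- the divergence at a fixed pair (A'', B)
    set d : Finset α → ℝ := fun A'' =>
      (∑ y ∈ B, q x y A'' B) - ∑ z ∈ Finset.univ \ B, q x z A'' (insert z B) with hd
    have hG : ∀ A', A ⊆ A' → ∑ A'' ∈ supOf A', d A'' = 0 := by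
      intro A' hAA'
      have hxA' : x ∈ A' := hAA' hx
      have hA'ne : A'.Nonempty := ⟨x, hxA'⟩
      set gB : Finset α → ℝ := fun B'' => ∑ A'' ∈ supOf A',
        ((∑ y ∈ B'', q x y A'' B'') - ∑ z ∈ Finset.univ \ B'', q x z A'' (insert z B'')) with hgB
      have hP : ∀ B', B ⊆ B' → ∑ B'' ∈ supOf B', gB B'' = ∑ y ∈ Finset.univ, p x y A' Finset.univ := by
        intro B' hBB'
        have hB'ne : B'.Nonempty := hB.mono hBB'
        rw [← key A' B' x hA'ne hB'ne]
        exact hmarg A' B' Finset.univ hA'ne hB'ne ⟨x, mem_univ x⟩ x hxA'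
      have hm := mobius_sup gB B
      have : ∑ B' ∈ supOf B, (-1 : ℝ) ^ (B' \ B).card * ∑ B'' ∈ supOf B', gB B''
          = (∑ B' ∈ supOf B, (-1 : ℝ) ^ (B' \ B).card) * ∑ y ∈ Finset.univ, p x y A' Finset.univ := by
        rw [Finset.sum_mul]
        exact Finset.sum_congr rfl (fun B' hB' => by rw [hP B' (mem_supOf.1 hB')])
      rw [this] at hm
      have halt : ∑ B' ∈ supOf B, (-1 : ℝ) ^ (B' \ B).card = 0 := by
        have := alt_sum_Icc B Finset.univ (subset_univ B)
        rw [if_neg (fun h => hBu h.symm)] at this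
        exact this
      rw [halt, zero_mul] at hm
      exact hm.symm ▸ rfl
    have hm := mobius_sup d A
    rw [Finset.sum_eq_zero (fun A' hA' => by rw [hG A' (mem_supOf.1 hA'), mul_zero])] at hm
    have : d A = 0 := hm.symm
    have := sub_eq_zero.1 this
    exact this
  · -- flow condition ⇒ marginality
    intro hflow A B C hA hB hC x hx
    have e : ∀ B₀ : Finset α, B₀.Nonempty →
        ∑ y ∈ B₀, p x y A B₀ = ∑ A' ∈ supOf A,
          ((∑ y ∈ Finset.univ, q x y A' Finset.univ)
            - ∑ z ∈ Finset.univ \ Finset.univ, q x z A' (insert z Finset.univ)) := by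
      intro B₀ hB₀
      rw [key A B₀ x hA hB₀]
      refine Finset.sum_eq_single_of_mem Finset.univ (mem_supOf.2 (subset_univ B₀)) ?_
      intro B' hB' hne
      refine Finset.sum_eq_zero (fun A' hA' => ?_)
      have hAA' : A ⊆ A' := mem_supOf.1 hA'
      have hxA' : x ∈ A' := hAA' hx
      have hB'ne : B'.Nonempty := hB₀.mono (mem_supOf.1 hB')
      rw [hflow A' ⟨x, hxA'⟩ B' hB'ne hne x hxA', sub_self]
    rw [e B hB, e C hC]
end

section
/- If a random joint choice rule p has a consumption dependent random utility representation (ν, t), then its Möbius inverse satisfies q(x,y,A,B) = ∑_{≻∈I(x,A)} ∑_{≻'∈I(y,B)} ν(≻)·t_{≻'}(x,≻) for all A,B ⊆ X and (x,y) ∈ A×B; conversely, if this identity holds for all (x,y,A,B), then (ν,t) represents p. -/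
open Finset

variable {α : Type*} [Fintype α] [DecidableEq α]

/-- A preference (linear order) on `α`, encoded as a ranking: `r x < r y` means `x` is
strictly preferred to `y`. -/
abbrev Pref (α : Type*) [Fintype α] := α ≃ Fin (Fintype.card α)

/-- `NSet x A`: preferences whose maximal element of `A` is `x`. -/
def NSet (x : α) (A : Finset α) : Finset (Pref α) :=
  Finset.univ.filter (fun r => ∀ y ∈ A, y ≠ x → r x < r y)

/-- `ISet x A`: preferences ranking everything outside `A` above `x` and `x` above the
rest of `A`. -/
def ISet (x : α) (A : Finset α) : Finset (Pref α) :=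
  Finset.univ.filter (fun r => (∀ z, z ∉ A → r z < r x) ∧ ∀ y ∈ A, y ≠ x → r x < r y)

lemma ISet_pred_iff (x : α) (A' : Finset α) (r : Pref α) :
    ((∀ z, z ∉ A' → r z < r x) ∧ ∀ y ∈ A', y ≠ x → r x < r y) ↔
      A' = Finset.univ.filter (fun z => r x ≤ r z) := by
  constructor
  · rintro ⟨h1, h2⟩
    ext z
    simp only [mem_filter, mem_univ, true_and]
    constructor
    · intro hz
      by_cases hzx : z = x
      · subst hzx; exact le_rfl
      · exact le_of_lt (h2 z hz hzx)
    · intro hle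
      by_contra hz
      exact absurd hle (not_le.2 (h1 z hz))
  · rintro rfl
    constructor
    · intro z hz
      simp only [mem_filter, mem_univ, true_and] at hz
      exact not_le.1 hz
    · intro yy hy hyx
      simp only [mem_filter, mem_univ, true_and] at hy
      exact lt_of_le_of_ne hy (fun h => hyx (r.injective h.symm))

lemma sum_ISet_supersets (x : α) {A : Finset α} (hx : x ∈ A) (h : Pref α → ℝ) :
    ∑ A' ∈ Finset.univ.powerset.filter (fun A' => A ⊆ A'), ∑ r ∈ ISet x A', h r
      = ∑ r ∈ NSet x A, h r := by
  have h1 : ∀ A' ∈ Finset.univ.powerset.filter (fun A' => A ⊆ A'),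
      ∑ r ∈ ISet x A', h r = ∑ r : Pref α,
        if (∀ z, z ∉ A' → r z < r x) ∧ ∀ y ∈ A', y ≠ x → r x < r y then h r else 0 :=
    fun A' _ => by rw [ISet, Finset.sum_filter]
  rw [Finset.sum_congr rfl h1, Finset.sum_comm, NSet]
  conv_rhs => rw [Finset.sum_filter]
  refine Finset.sum_congr rfl fun r _ => ?_
  have hrw : ∀ A' ∈ Finset.univ.powerset.filter (fun A' => A ⊆ A'),
      (if (∀ z, z ∉ A' → r z < r x) ∧ ∀ y ∈ A', y ≠ x → r x < r y then h r else 0)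
        = if A' = Finset.univ.filter (fun z => r x ≤ r z) then h r else 0 := by
    intro A' _
    simp only [ISet_pred_iff]
  rw [Finset.sum_congr rfl hrw, Finset.sum_ite_eq']
  have hmem : (Finset.univ.filter (fun z => r x ≤ r z)
      ∈ Finset.univ.powerset.filter (fun A' => A ⊆ A'))
      ↔ ∀ y ∈ A, y ≠ x → r x < r y := by
    constructor
    · intro hm yy hy hyx
      simp only [mem_filter, mem_powerset] at hm
      have h2 := hm.2 hy
      simp only [mem_filter, mem_univ, true_and] at h2
      exact lt_of_le_of_ne h2 (fun h => hyx (r.injective h.symm))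
    · intro hlt
      simp only [mem_filter, mem_powerset, subset_univ, true_and]
      intro z hz
      simp only [mem_filter, mem_univ, true_and]
      by_cases hzx : z = x
      · subst hzx; exact le_rfl
      · exact le_of_lt (hlt z hz hzx)
  by_cases hc : ∀ y ∈ A, y ≠ x → r x < r y
  · rw [if_pos (hmem.2 hc), if_pos hc]
  · rw [if_neg (fun hm => hc (hmem.1 hm)), if_neg hc]

lemma sum_ISet_supersets₂ (x y : α) {A B : Finset α} (hx : x ∈ A) (hy : y ∈ B)
    (F : Pref α → Pref α → ℝ) :
    ∑ A' ∈ Finset.univ.powerset.filter (fun A' => A ⊆ A'),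
      ∑ B' ∈ Finset.univ.powerset.filter (fun B' => B ⊆ B'),
        ∑ r ∈ ISet x A', ∑ r' ∈ ISet y B', F r r'
      = ∑ r ∈ NSet x A, ∑ r' ∈ NSet y B, F r r' := by
  have step1 : ∀ A' : Finset α,
      ∑ B' ∈ Finset.univ.powerset.filter (fun B' => B ⊆ B'),
        ∑ r ∈ ISet x A', ∑ r' ∈ ISet y B', F r r'
      = ∑ r ∈ ISet x A', ∑ r' ∈ NSet y B, F r r' := by
    intro A'
    rw [Finset.sum_comm]
    exact Finset.sum_congr rfl fun r _ => sum_ISet_supersets y hy (fun r' => F r r')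
  rw [Finset.sum_congr rfl (fun A' _ => step1 A')]
  exact sum_ISet_supersets x hx _

/-- `(ν, t)` is a consumption dependent random utility representation of
the random joint choice rule `p` iff the Möbius inverse `q` of `p` satisfies
`q(x,y,A,B) = ∑_{≻∈I(x,A)} ∑_{≻'∈I(y,B)} ν(≻)·t_{≻'}(x,≻)` for all menus and
`(x,y) ∈ A×B`. -/
theorem cdrum_identification
    (ν : Pref α → ℝ) (hν0 : ∀ r, 0 ≤ ν r) (hν1 : ∑ r, ν r = 1)
    (t : α → Pref α → Pref α → ℝ)
    (ht0 : ∀ x r r', 0 ≤ t x r r') (ht1 : ∀ x r, ∑ r', t x r r' = 1)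
    (p q : α → α → Finset α → Finset α → ℝ)
    (hq : ∀ x y (A B : Finset α), A.Nonempty → B.Nonempty →
      p x y A B = ∑ A' ∈ Finset.univ.powerset.filter (fun A' => A ⊆ A'),
        ∑ B' ∈ Finset.univ.powerset.filter (fun B' => B ⊆ B'), q x y A' B') :
    (∀ (A B : Finset α), A.Nonempty → B.Nonempty → ∀ x ∈ A, ∀ y ∈ B,
        p x y A B = ∑ r ∈ NSet x A, ∑ r' ∈ NSet y B, ν r * t x r r') ↔
      (∀ (A B : Finset α), A.Nonempty → B.Nonempty → ∀ x ∈ A, ∀ y ∈ B,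
        q x y A B = ∑ r ∈ ISet x A, ∑ r' ∈ ISet y B, ν r * t x r r') := by
  constructor
  · intro hp A₀ B₀ _ _ x hx₀ y hy₀
    -- q - f has vanishing superset-sums; downward induction
    set f : Finset α → Finset α → ℝ :=
      fun A B => ∑ r ∈ ISet x A, ∑ r' ∈ ISet y B, ν r * t x r r' with hf
    have key : ∀ (A B : Finset α), x ∈ A → y ∈ B →
        ∑ A' ∈ Finset.univ.powerset.filter (fun A' => A ⊆ A'),
          ∑ B' ∈ Finset.univ.powerset.filter (fun B' => B ⊆ B'),
            (q x y A' B' - f A' B') = 0 := by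
      intro A B hx hy
      have h1 := hq x y A B ⟨x, hx⟩ ⟨y, hy⟩
      have h2 := hp A B ⟨x, hx⟩ ⟨y, hy⟩ x hx y hy
      have h3 := sum_ISet_supersets₂ x y hx hy (fun r r' => ν r * t x r r')
      simp only [Finset.sum_sub_distrib]
      rw [← h1, hf]
      simp only [h3, h2]
      ring
    suffices H : ∀ n (A B : Finset α), x ∈ A → y ∈ B → Aᶜ.card + Bᶜ.card ≤ n →
        q x y A B = f A B by
      exact H _ A₀ B₀ hx₀ hy₀ le_rfl
    intro n
    induction n using Nat.strong_induction_on with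
    | _ n ih =>
      intro A B hx hy hcard
      have hz := key A B hx hy
      have hAmem : A ∈ Finset.univ.powerset.filter (fun A' => A ⊆ A') := by
        simp
      have hBmem : B ∈ Finset.univ.powerset.filter (fun B' => B ⊆ B') := by
        simp
      have ihuse : ∀ (A' B' : Finset α), A ⊆ A' → B ⊆ B' →
          A'ᶜ.card + B'ᶜ.card < Aᶜ.card + Bᶜ.card → q x y A' B' - f A' B' = 0 := by
        intro A' B' hAA hBB hlt
        have := ih (A'ᶜ.card + B'ᶜ.card) (lt_of_lt_of_le hlt hcard) A' B'
          (hAA hx) (hBB hy) le_rfl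
        linarith [this]
      have cardlt : ∀ (C C' : Finset α), C ⊆ C' → C ≠ C' → C'ᶜ.card < Cᶜ.card := by
        intro C C' hsub hne
        have h1 : C.card < C'.card := Finset.card_lt_card (lt_of_le_of_ne hsub hne)
        have h2 : C'.card ≤ Fintype.card α := Finset.card_le_univ C'
        simp only [Finset.card_compl]
        omega
      rw [Finset.sum_eq_single_of_mem A hAmem ?h₁] at hz
      · rw [Finset.sum_eq_single_of_mem B hBmem ?h₂] at hz
        · linarith [hz]
        · intro B' hB' hne
          simp only [mem_filter, mem_powerset] at hB'
          exact ihuse A B' subset_rfl hB'.2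
            (by have := cardlt B B' hB'.2 (Ne.symm hne); omega)
      · intro A' hA' hne
        simp only [mem_filter, mem_powerset] at hA'
        refine Finset.sum_eq_zero fun B' hB' => ?_
        simp only [mem_filter, mem_powerset] at hB'
        have hBle : B'ᶜ.card ≤ Bᶜ.card := by
          simp only [Finset.card_compl]
          have := Finset.card_le_card hB'.2
          omega
        exact ihuse A' B' hA'.2 hB'.2
          (by have := cardlt A A' hA'.2 (Ne.symm hne); omega)
  · intro hI A B hA hB x hx y hy
    rw [hq x y A B hA hB, ← sum_ISet_supersets₂ x y hx hy (fun r r' => ν r * t x r r')]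
    refine Finset.sum_congr rfl fun A' hA' => Finset.sum_congr rfl fun B' hB' => ?_
    simp only [mem_filter, mem_powerset] at hA' hB'
    exact hI A' B' ⟨x, hA'.2 hx⟩ ⟨y, hB'.2 hy⟩ x (hA'.2 hx) y (hB'.2 hy)
end

section
/- If a random joint choice rule p has a consumption dependent random utility representation, then p satisfies complete monotonicity (q(x,y,A,B) ≥ 0 for all A,B ∈ 𝒳 and (x,y) ∈ A×B) and marginality (∑_{y∈B} p(x,y,A,B) is independent of B). -/
open Finset

variable {α : Type*} [Fintype α] [DecidableEq α]

/-- The (weak) upper contour set of `x` under `r`, together with `x`. -/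
def Umax (x : α) (r : Pref α) : Finset α :=
  insert x (Finset.univ.filter fun z => r x < r z)

lemma mem_NSet_iff {x : α} {A : Finset α} {r : Pref α} :
    r ∈ NSet x A ↔ A ⊆ Umax x r := by
  simp only [NSet, Umax, mem_filter, mem_univ, true_and, Finset.subset_iff, mem_insert]
  constructor
  · intro h z hz
    by_cases hzx : z = x
    · exact Or.inl hzx
    · exact Or.inr (by simpa using h z hz hzx)
  · intro h z hz hzx
    rcases h hz with h1 | h1
    · exact absurd h1 hzx
    · simpa using h1

lemma sum_NSet_partition {B : Finset α} (hB : B.Nonempty) (f : Pref α → ℝ) :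
    ∑ y ∈ B, ∑ r' ∈ NSet y B, f r' = ∑ r', f r' := by
  have step : ∀ y ∈ B, ∑ r' ∈ NSet y B, f r'
      = ∑ r' : Pref α, if r' ∈ NSet y B then f r' else 0 := by
    intro y _
    rw [Finset.sum_ite_mem, Finset.univ_inter]
  rw [Finset.sum_congr rfl step, Finset.sum_comm]
  apply Finset.sum_congr rfl
  intro r' _
  obtain ⟨y₀, hy₀B, hy₀min⟩ := Finset.exists_min_image B (fun z => r' z) hB
  have hy₀mem : r' ∈ NSet y₀ B := by
    simp only [NSet, mem_filter, mem_univ, true_and]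
    intro z hz hzne
    exact lt_of_le_of_ne (hy₀min z hz) (fun h => hzne (r'.injective h.symm))
  rw [Finset.sum_eq_single_of_mem y₀ hy₀B, if_pos hy₀mem]
  intro y hy hne
  rw [if_neg]
  intro hmem
  simp only [NSet, mem_filter, mem_univ, true_and] at hmem
  exact absurd (hy₀min y hy) (not_le.mpr (hmem y₀ hy₀B (fun h => hne h.symm)))

lemma fiber_sum (x : α) (A : Finset α) (g : Pref α → ℝ) :
    ∑ A' ∈ Finset.univ.powerset.filter (fun A' => A ⊆ A'),
      ∑ r ∈ Finset.univ.filter (fun r => Umax x r = A'), g r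
    = ∑ r ∈ NSet x A, g r := by
  rw [← Finset.sum_fiberwise_of_maps_to (g := Umax x)
      (t := Finset.univ.powerset.filter (fun A' => A ⊆ A'))
      (fun r hr => by
        simp only [mem_filter, mem_powerset]
        exact ⟨Finset.subset_univ _, mem_NSet_iff.mp hr⟩) g]
  apply Finset.sum_congr rfl
  intro A' hA'
  simp only [mem_filter, mem_powerset] at hA'
  apply Finset.sum_congr _ (fun _ _ => rfl)
  ext r
  simp only [mem_filter, mem_univ, true_and]
  constructor
  · intro h; exact ⟨mem_NSet_iff.mpr (h ▸ hA'.2), h⟩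
  · intro h; exact h.2

lemma sum_q' (ν : Pref α → ℝ) (t : α → Pref α → Pref α → ℝ) (x y : α) (A B : Finset α) :
    ∑ A' ∈ Finset.univ.powerset.filter (fun A' => A ⊆ A'),
      ∑ B' ∈ Finset.univ.powerset.filter (fun B' => B ⊆ B'),
        (∑ r ∈ Finset.univ.filter (fun r => Umax x r = A'),
         ∑ r' ∈ Finset.univ.filter (fun r' => Umax y r' = B'), ν r * t x r r')
    = ∑ r ∈ NSet x A, ∑ r' ∈ NSet y B, ν r * t x r r' := by
  rw [← fiber_sum x A]
  apply Finset.sum_congr rfl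
  intro A' _
  rw [Finset.sum_comm]
  apply Finset.sum_congr rfl
  intro r _
  exact fiber_sum y B (fun r' => ν r * t x r r')

/-- If a random joint choice rule `p` has a consumption dependent random
utility representation `(ν, t)`, then `p` satisfies complete monotonicity (its Möbius
inverse `q` is everywhere nonnegative on menus and chosen alternatives) and
marginality. -/
theorem cdrum_implies_compMono_and_marginality
    (ν : Pref α → ℝ) (hν0 : ∀ r, 0 ≤ ν r) (hν1 : ∑ r, ν r = 1)
    (t : α → Pref α → Pref α → ℝ)
    (ht0 : ∀ x r r', 0 ≤ t x r r') (ht1 : ∀ x r, ∑ r', t x r r' = 1)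
    (p q : α → α → Finset α → Finset α → ℝ)
    (hq : ∀ x y (A B : Finset α), A.Nonempty → B.Nonempty →
      p x y A B = ∑ A' ∈ Finset.univ.powerset.filter (fun A' => A ⊆ A'),
        ∑ B' ∈ Finset.univ.powerset.filter (fun B' => B ⊆ B'), q x y A' B')
    (hrep : ∀ (A B : Finset α), A.Nonempty → B.Nonempty → ∀ x ∈ A, ∀ y ∈ B,
      p x y A B = ∑ r ∈ NSet x A, ∑ r' ∈ NSet y B, ν r * t x r r') :
    (∀ (A B : Finset α), A.Nonempty → B.Nonempty → ∀ x ∈ A, ∀ y ∈ B,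
        0 ≤ q x y A B) ∧
      (∀ (A B C : Finset α), A.Nonempty → B.Nonempty → C.Nonempty → ∀ x ∈ A,
        ∑ y ∈ B, p x y A B = ∑ y ∈ C, p x y A C) := by
  constructor
  · -- complete monotonicity
    intro A B hA hB x hx y hy
    -- q is uniquely determined: equals the explicit nonnegative formula
    have key : ∀ n (A B : Finset α), Aᶜ.card + Bᶜ.card = n →
        A.Nonempty → B.Nonempty → x ∈ A → y ∈ B →
        q x y A B = ∑ r ∈ Finset.univ.filter (fun r => Umax x r = A),
          ∑ r' ∈ Finset.univ.filter (fun r' => Umax y r' = B), ν r * t x r r' := by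
      intro n
      induction n using Nat.strong_induction_on with
      | _ n ih =>
        intro A B hn hA hB hx hy
        set SA := Finset.univ.powerset.filter (fun A' => A ⊆ A') with hSA
        set SB := Finset.univ.powerset.filter (fun B' => B ⊆ B') with hSB
        set T := SA ×ˢ SB with hT
        have hABT : (A, B) ∈ T := by
          simp [hT, hSA, hSB, Finset.mem_product]
        have hp1 : p x y A B = ∑ P ∈ T, q x y P.1 P.2 := by
          rw [hq x y A B hA hB]
          rw [Finset.sum_product]
        have hp2 : p x y A B = ∑ P ∈ T,
            ∑ r ∈ Finset.univ.filter (fun r => Umax x r = P.1),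
              ∑ r' ∈ Finset.univ.filter (fun r' => Umax y r' = P.2), ν r * t x r r' := by
          rw [hrep A B hA hB x hx y hy, ← sum_q' ν t x y A B]
          rw [Finset.sum_product]
        have hrest : ∀ P ∈ T.erase (A, B), q x y P.1 P.2
            = ∑ r ∈ Finset.univ.filter (fun r => Umax x r = P.1),
              ∑ r' ∈ Finset.univ.filter (fun r' => Umax y r' = P.2), ν r * t x r r' := by
          intro P hP
          obtain ⟨hne, hPT⟩ := Finset.mem_erase.mp hP
          rw [hT, Finset.mem_product, hSA, hSB] at hPT
          obtain ⟨h1, h2⟩ := hPT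
          simp only [mem_filter, mem_powerset] at h1 h2
          have hs1 : A ⊆ P.1 := h1.2
          have hs2 : B ⊆ P.2 := h2.2
          have hlt : P.1ᶜ.card + P.2ᶜ.card < n := by
            have hc1 : A.card ≤ P.1.card := Finset.card_le_card hs1
            have hc2 : B.card ≤ P.2.card := Finset.card_le_card hs2
            have hstrict : A.card < P.1.card ∨ B.card < P.2.card := by
              by_contra hcon
              push_neg at hcon
              have e1 : A = P.1 := Finset.eq_of_subset_of_card_le hs1 hcon.1
              have e2 : B = P.2 := Finset.eq_of_subset_of_card_le hs2 hcon.2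
              exact hne (Prod.ext e1.symm e2.symm)
            have hu1 : P.1.card ≤ Fintype.card α := Finset.card_le_univ _
            have hu2 : P.2.card ≤ Fintype.card α := Finset.card_le_univ _
            rw [Finset.card_compl, Finset.card_compl]
            rw [← hn, Finset.card_compl, Finset.card_compl]
            omega
          exact ih _ hlt P.1 P.2 rfl (hA.mono hs1) (hB.mono hs2) (hs1 hx) (hs2 hy)
        rw [← Finset.add_sum_erase T _ hABT] at hp1 hp2
        have hsum : ∑ P ∈ T.erase (A, B), q x y P.1 P.2
            = ∑ P ∈ T.erase (A, B),
              ∑ r ∈ Finset.univ.filter (fun r => Umax x r = P.1),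
                ∑ r' ∈ Finset.univ.filter (fun r' => Umax y r' = P.2), ν r * t x r r' :=
          Finset.sum_congr rfl hrest
        have := hp1.symm.trans hp2
        rw [hsum] at this
        linarith
    rw [key _ A B rfl hA hB hx hy]
    apply Finset.sum_nonneg
    intro r _
    apply Finset.sum_nonneg
    intro r' _
    exact mul_nonneg (hν0 r) (ht0 x r r')
  · -- marginality
    intro A B C hA hB hC x hx
    have marg : ∀ (D : Finset α), D.Nonempty →
        ∑ y ∈ D, p x y A D = ∑ r ∈ NSet x A, ν r := by
      intro D hD
      calc ∑ y ∈ D, p x y A D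
          = ∑ y ∈ D, ∑ r ∈ NSet x A, ∑ r' ∈ NSet y D, ν r * t x r r' :=
            Finset.sum_congr rfl (fun y hy => hrep A D hA hD x hx y hy)
        _ = ∑ r ∈ NSet x A, ∑ y ∈ D, ∑ r' ∈ NSet y D, ν r * t x r r' := Finset.sum_comm
        _ = ∑ r ∈ NSet x A, ν r := by
            apply Finset.sum_congr rfl
            intro r _
            rw [sum_NSet_partition hD (fun r' => ν r * t x r r'), ← Finset.mul_sum,
              ht1 x r, mul_one]
    rw [marg B hB, marg C hC]
end

section
/- In the persistent craving model with full-support craving-monotonic ν, the stationary distribution at the menu X∖{x} satisfies ν_{X∖{x}}(≻_x) = ν(≻_x) / (1 − φ(M(▷,X∖{x}),x)·(1−ν(≻_x))). In particular, since φ(M(▷,X∖{x}),x) ∈ (0,1) and ν(≻_x) < 1, it follows that ν_{X∖{x}}(≻_x) > ν(≻_x). -/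
open Finset

/-- In the persistent craving model, the stationary distribution
`ν'` of the preference chain at menu `X∖{x}` satisfies
`ν'(≻_x) = ν(≻_x) / (1 − φ(M(▷,X∖{x}),x)·(1−ν(≻_x)))`, and in particular
`ν'(≻_x) > ν(≻_x)`.

The base order `▷` is the linear order on `α` (larger = more preferred); craving
preferences are indexed by the craved alternative, so distributions over craving
preferences are functions `α → ℝ`. At menu `X∖{x}`, a consumer craving `y ≠ x`
consumes `y`, while a consumer craving `x` consumes `b = M(▷,X∖{x})`, the
`▷`-maximum of `X∖{x}`. The chain is
`Q y y' = φ(ch y, y)·1{y'=y} + (1−φ(ch y, y))·ν(y')`. -/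
theorem persistent_craving_stationary_formula
    {α : Type*} [Fintype α] [LinearOrder α] (hcard : 3 ≤ Fintype.card α)
    (x b : α) (hne : (Finset.univ.erase x).Nonempty)
    (hb : b = (Finset.univ.erase x).max' hne)
    (ν : α → ℝ) (hν0 : ∀ w, 0 < ν w) (hν1 : ∑ w, ν w = 1)
    (hmono : ∀ w y : α, y < w → ν y < ν w)
    (φ : α → α → ℝ) (hφself : ∀ w, φ w w = 0)
    (hφpos : ∀ w y, w ≠ y → 0 < φ w y) (hφlt : ∀ w y, φ w y < 1)
    (Q : α → α → ℝ)
    (hQ : ∀ y y', Q y y' =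
      φ (if y = x then b else y) y * (if y' = y then 1 else 0) +
        (1 - φ (if y = x then b else y) y) * ν y')
    (ν' : α → ℝ) (hν'0 : ∀ y, 0 ≤ ν' y) (hν'1 : ∑ y, ν' y = 1)
    (hstat : ∀ y', ∑ y, ν' y * Q y y' = ν' y') :
    ν' x = ν x / (1 - φ b x * (1 - ν x)) ∧ ν x < ν' x := by
  have hbmem : b ∈ Finset.univ.erase x := hb ▸ Finset.max'_mem _ hne
  have hbx : b ≠ x := (Finset.mem_erase.mp hbmem).1
  set p := φ b x with hp
  have hp0 : 0 < p := hφpos b x hbx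
  have hp1 : p < 1 := hφlt b x
  -- ν x < 1
  have hsum_erase : ∑ y ∈ Finset.univ.erase x, ν y = 1 - ν x := by
    have := Finset.add_sum_erase Finset.univ ν (Finset.mem_univ x)
    rw [hν1] at this; linarith
  have hνx1 : ν x < 1 := by
    have hble : ν b ≤ ∑ y ∈ Finset.univ.erase x, ν y :=
      Finset.single_le_sum (fun i _ => (hν0 i).le) hbmem
    have := hν0 b
    linarith [hsum_erase ▸ hble]
  -- key stationary equation at x
  have hQx : Q x x = p + (1 - p) * ν x := by
    rw [hQ]; simp [hp]
  have hQyx : ∀ y ∈ Finset.univ.erase x, ν' y * Q y x = ν' y * ν x := by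
    intro y hy
    have hyx : y ≠ x := (Finset.mem_erase.mp hy).1
    rw [hQ]
    simp [hyx, Ne.symm hyx, hφself]
  have hsplit : ν' x * Q x x + ∑ y ∈ Finset.univ.erase x, ν' y * Q y x = ν' x :=
    by rw [Finset.add_sum_erase Finset.univ (fun y => ν' y * Q y x) (Finset.mem_univ x)]
       exact hstat x
  have herase : ∑ y ∈ Finset.univ.erase x, ν' y * Q y x = (1 - ν' x) * ν x := by
    rw [Finset.sum_congr rfl hQyx, ← Finset.sum_mul]
    have := Finset.add_sum_erase Finset.univ ν' (Finset.mem_univ x)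
    rw [hν'1] at this
    have : ∑ y ∈ Finset.univ.erase x, ν' y = 1 - ν' x := by linarith
    rw [this]
  rw [herase, hQx] at hsplit
  have hkey : ν' x * (1 - p * (1 - ν x)) = ν x := by ring_nf; ring_nf at hsplit; linarith
  have hD : 0 < 1 - p * (1 - ν x) := by
    nlinarith [mul_lt_mul_of_pos_right hp1 (show (0:ℝ) < 1 - ν x by linarith), hν0 x]
  have hformula : ν' x = ν x / (1 - p * (1 - ν x)) := by
    field_simp
    linarith [hkey]
  refine ⟨hformula, ?_⟩
  rw [hformula]
  rw [lt_div_iff₀ hD]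
  nlinarith [mul_pos (mul_pos (hν0 x) hp0) (show (0:ℝ) < 1 - ν x by linarith)]
end

section
/- Consider the persistent craving Markov chain at menu X∖{x}. For any two craving preferences ≻_y, ≻_z with y ≠ x, z ≠ x, the ratio of stationary probabilities satisfies ν_{X∖{x}}(≻_y)/ν_{X∖{x}}(≻_z) = ν(≻_y)/ν(≻_z). Combined with ν_{X∖{x}}(≻_x) > ν(≻_x), this implies ν_{X∖{x}}(≻_y) < ν(≻_y) for all y ≠ x, and hence the induced random choice rule violates regularity: there exists z ∈ X∖{x} with p(z, X∖{x}) < p(z, X). -/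
open Finset

/-- In the persistent craving model at menu `X∖{x}` (same setup as the
stationary-formula result: craving preferences indexed by the craved alternative, base
linear order `▷` on `α`, a consumer craving `x` consumes `b = M(▷,X∖{x})` while
everyone else sates their craving), the stationary distribution `ν'` satisfies
`ν'(≻_y)/ν'(≻_z) = ν(≻_y)/ν(≻_z)` for `y,z ≠ x`; consequently `ν'(≻_y) < ν(≻_y)` for
all `y ≠ x`, and regularity fails: some `z ≠ x` is chosen with strictly smaller
probability from `X∖{x}` than from `X` (where `p(z,X∖{x}) = ∑_{y : ch y = z} ν'(y)`
and `p(z,X) = ν(z)`). -/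
theorem persistent_craving_regularity_violation
    {α : Type*} [Fintype α] [LinearOrder α] (hcard : 3 ≤ Fintype.card α)
    (x b : α) (hne : (Finset.univ.erase x).Nonempty)
    (hb : b = (Finset.univ.erase x).max' hne)
    (ν : α → ℝ) (hν0 : ∀ w, 0 < ν w) (hν1 : ∑ w, ν w = 1)
    (hmono : ∀ w y : α, y < w → ν y < ν w)
    (φ : α → α → ℝ) (hφself : ∀ w, φ w w = 0)
    (hφpos : ∀ w y, w ≠ y → 0 < φ w y) (hφlt : ∀ w y, φ w y < 1)
    (Q : α → α → ℝ)
    (hQ : ∀ y y', Q y y' =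
      φ (if y = x then b else y) y * (if y' = y then 1 else 0) +
        (1 - φ (if y = x then b else y) y) * ν y')
    (ν' : α → ℝ) (hν'0 : ∀ y, 0 ≤ ν' y) (hν'1 : ∑ y, ν' y = 1)
    (hstat : ∀ y', ∑ y, ν' y * Q y y' = ν' y') :
    (∀ y z : α, y ≠ x → z ≠ x → ν' y / ν' z = ν y / ν z) ∧
    (∀ y : α, y ≠ x → ν' y < ν y) ∧
    ∃ z : α, z ≠ x ∧
      (∑ y ∈ Finset.univ.filter (fun y => (if y = x then b else y) = z), ν' y) < ν z := by

  have hb_mem : b ∈ Finset.univ.erase x := hb ▸ Finset.max'_mem _ hne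
  have hbx : b ≠ x := (Finset.mem_erase.mp hb_mem).1
  have hφ0 : 0 < φ b x := hφpos b x hbx
  have hφ1 : φ b x < 1 := hφlt b x
  -- sum over erase x
  have hsum_erase : ∑ y ∈ Finset.univ.erase x, ν' y = 1 - ν' x := by
    rw [Finset.sum_erase_eq_sub (Finset.mem_univ x), hν'1]
  have key : ∀ y', ν' y' =
      ν' x * (φ b x * (if y' = x then 1 else 0) + (1 - φ b x) * ν y')
        + (1 - ν' x) * ν y' := by
    intro y'
    have h := hstat y'
    rw [← Finset.add_sum_erase _ _ (Finset.mem_univ x)] at h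
    have h2 : ∀ y ∈ Finset.univ.erase x, ν' y * Q y y' = ν' y * ν y' := by
      intro y hy
      have hyx : y ≠ x := (Finset.mem_erase.mp hy).1
      rw [hQ y y', if_neg hyx, hφself y]
      ring
    rw [Finset.sum_congr rfl h2, ← Finset.sum_mul, hsum_erase, hQ x y', if_pos rfl] at h
    rw [← h]
  set c : ℝ := 1 - φ b x * ν' x with hc_def
  have hc_eq : ∀ y, y ≠ x → ν' y = c * ν y := by
    intro y hy
    have := key y
    rw [if_neg hy] at this
    rw [this, hc_def]; ring
  have hν'x_le : ν' x ≤ 1 := by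
    rw [← hν'1]
    exact Finset.single_le_sum (fun i _ => hν'0 i) (Finset.mem_univ x)
  have hc_pos : 0 < c := by
    have := hν'0 x
    nlinarith
  have hx_eq : ν' x * (1 - φ b x) = c * ν x := by
    have := key x
    rw [if_pos rfl] at this
    rw [hc_def]; nlinarith [this]
  have hν'x_pos : 0 < ν' x := by
    nlinarith [hν0 x, mul_pos hc_pos (hν0 x)]
  have hc1 : c < 1 := by
    have := mul_pos hφ0 hν'x_pos
    rw [hc_def]; linarith
  refine ⟨?_, ?_, ?_⟩
  · intro y z hy hz
    rw [hc_eq y hy, hc_eq z hz, mul_div_mul_left _ _ (ne_of_gt hc_pos)]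
  · intro y hy
    rw [hc_eq y hy]
    nlinarith [hν0 y]
  · -- find z ≠ x, z ≠ b
    have hcard2 : ({x, b} : Finset α).card ≤ 2 := by
      calc ({x, b} : Finset α).card ≤ ({b} : Finset α).card + 1 :=
            Finset.card_insert_le _ _
        _ = 2 := by simp
    have hsd : (Finset.univ \ {x, b}).Nonempty := by
      rw [← Finset.card_pos, Finset.card_sdiff_of_subset (Finset.subset_univ _)]
      have : Finset.univ.card = Fintype.card α := rfl
      omega
    obtain ⟨z, hzmem⟩ := hsd
    simp only [Finset.mem_sdiff, Finset.mem_univ, Finset.mem_insert,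
      Finset.mem_singleton, true_and, not_or] at hzmem
    obtain ⟨hzx, hzb⟩ := hzmem
    refine ⟨z, hzx, ?_⟩
    have hfil : Finset.univ.filter (fun y => (if y = x then b else y) = z) = {z} := by
      ext y
      simp only [Finset.mem_filter, Finset.mem_univ, true_and, Finset.mem_singleton]
      by_cases hyx : y = x
      · subst hyx
        rw [if_pos rfl]
        constructor
        · intro h; exact absurd h.symm hzb
        · intro h; exact absurd h.symm hzx
      · rw [if_neg hyx]
    rw [hfil, Finset.sum_singleton, hc_eq z hzx]
    nlinarith [hν0 z]
end
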